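/- arXiv:1502.06173 — 5 statements merged into one kernel-verified Lean document; each statement's English description precedes it below -/
import Mathlib

section
/- Let N ≥ 2 and let L and M be N×N real symmetric matrices. Then L̂ = M̂ (i.e., L̂_{ij} = M̂_{ij} for all i ≠ j) if and only if there exists a strictly increasing function f : ℝ → ℝ such that L_{ij} = f(M_{ij}) for all i ≠ j. -/
/-- The matrix ordering `M̂`: for off-diagonal indices `i ≠ j`, `matOrd M i j` is the
number of upper-triangular entries `M k ℓ` (with `k < ℓ`) that are strictly smaller
than `M i j`. -/
noncomputable def matOrd {N : ℕ} (M : Matrix (Fin N) (Fin N) ℝ) (i j : Fin N) : ℕ :=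
  (Finset.univ.filter (fun q : Fin N × Fin N => q.1 < q.2 ∧ M q.1 q.2 < M i j)).card

/-!
`matOrd M i j` depends only on the value `M i j`, and, for symmetric `M`, it is strictly
increasing in that value over the off-diagonal entries. So `L̂ = M̂` says exactly that
`L` and `M` compare their off-diagonal entries in the same way, i.e. that `L = g ∘ M` for a `g`
strictly increasing on the finite set of off-diagonal values of `M`. Such a `g` extends to a
strictly increasing function on `ℝ`: subtracting `δ x`, with `δ > 0` below every slope of `g`,
leaves a monotone function, which extends monotonically.
-/

open Set Filter Topology

theorem exists_pos_mul_sub_le_of_strictMonoOn {s : Set ℝ} {f : ℝ → ℝ} (hf : StrictMonoOn f s)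
    (hs : s.Finite) : ∃ δ > 0, ∀ x ∈ s, ∀ y ∈ s, x < y → δ * (y - x) ≤ f y - f x := by
  have hsmall : ∀ᶠ δ in 𝓝 (0 : ℝ),
      ∀ p ∈ {p ∈ s ×ˢ s | p.1 < p.2}, δ * (p.2 - p.1) ≤ f p.2 - f p.1 := by
    refine ((hs.prod hs).subset (sep_subset _ _)).eventually_all.2 fun p ⟨⟨hx, hy⟩, hlt⟩ => ?_
    have hpos : (0 : ℝ) * (p.2 - p.1) < f p.2 - f p.1 := by
      rw [zero_mul, sub_pos]
      exact hf hx hy hlt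
    filter_upwards [(continuous_mul_const (p.2 - p.1)).continuousAt.eventually_lt
      continuousAt_const hpos] with δ hδ using hδ.le
  obtain ⟨δ, hδ, hδpos⟩ :=
    ((hsmall.filter_mono nhdsWithin_le_nhds).and (self_mem_nhdsWithin (s := Ioi 0))).exists
  exact ⟨δ, hδpos, fun x hx y hy hxy => hδ (x, y) ⟨⟨hx, hy⟩, hxy⟩⟩

theorem StrictMonoOn.exists_strictMono_extension_of_finite {s : Set ℝ} {f : ℝ → ℝ}
    (hf : StrictMonoOn f s) (hs : s.Finite) : ∃ F : ℝ → ℝ, StrictMono F ∧ EqOn f F s := by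
  obtain ⟨δ, hδ, hslope⟩ := exists_pos_mul_sub_le_of_strictMonoOn hf hs
  have hmono : MonotoneOn (fun x => f x - δ * x) s := by
    intro x hx y hy hxy
    rcases hxy.eq_or_lt with rfl | hlt
    · exact le_rfl
    · linarith [hslope x hx y hy hlt]
  obtain ⟨G, hG, hGf⟩ := hmono.exists_monotone_extension
    (hs.image _).bddBelow (hs.image _).bddAbove
  refine ⟨fun x => G x + δ * x, fun x y hxy => ?_, fun x hx => ?_⟩
  · linarith [hG hxy.le, mul_lt_mul_of_pos_left hxy hδ]
  · linarith [hGf hx]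

theorem exists_strictMono_comp_eq_of_lt_iff_lt {ι : Type*} [Finite ι] {a b : ι → ℝ}
    (h : ∀ i j, a i < a j ↔ b i < b j) : ∃ f : ℝ → ℝ, StrictMono f ∧ ∀ i, b i = f (a i) := by
  have hle : ∀ i j, a i ≤ a j ↔ b i ≤ b j := fun i j => by simpa only [not_lt] using (h j i).not
  have hfac : b.FactorsThrough a := fun i j hij =>
    le_antisymm ((hle i j).1 hij.le) ((hle j i).1 hij.ge)
  have hg : StrictMonoOn (Function.extend a b id) (range a) := by
    rintro _ ⟨i, rfl⟩ _ ⟨j, rfl⟩ hij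
    rw [hfac.extend_apply, hfac.extend_apply]
    exact (h i j).1 hij
  obtain ⟨F, hF, hgF⟩ := hg.exists_strictMono_extension_of_finite (finite_range a)
  exact ⟨F, hF, fun i => (hfac.extend_apply id i).symm.trans (hgF (mem_range_self i))⟩

section matOrd

variable {N : ℕ} {L M : Matrix (Fin N) (Fin N) ℝ} {i j k l : Fin N}

theorem matOrd_le_matOrd (h : M k l ≤ M i j) : matOrd M k l ≤ matOrd M i j :=
  Finset.card_le_card <| Finset.monotone_filter_right _ fun _ _ hq => ⟨hq.1, hq.2.trans_le h⟩

theorem matOrd_lt_matOrd (hM : M.IsSymm) (hij : i ≠ j) (h : M i j < M k l) :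
    matOrd M i j < matOrd M k l := by
  -- the upper-triangular copy of the entry `M i j` is counted on the right only
  obtain ⟨p, hp, hMp⟩ : ∃ p : Fin N × Fin N, p.1 < p.2 ∧ M p.1 p.2 = M i j := by
    rcases hij.lt_or_gt with hlt | hlt
    · exact ⟨(i, j), hlt, rfl⟩
    · exact ⟨(j, i), hlt, hM.apply i j⟩
  refine Finset.card_lt_card <| (Finset.ssubset_iff_of_subset ?_).2 ⟨p, ?_, ?_⟩
  · exact Finset.monotone_filter_right _ fun _ _ hq => ⟨hq.1, hq.2.trans h⟩
  · simp only [Finset.mem_filter, Finset.mem_univ, true_and, hMp]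
    exact ⟨hp, h⟩
  · simp [hMp]

theorem matOrd_lt_matOrd_iff (hM : M.IsSymm) (hij : i ≠ j) :
    matOrd M i j < matOrd M k l ↔ M i j < M k l :=
  ⟨fun h => lt_of_not_ge fun h' => (matOrd_le_matOrd h').not_gt h, matOrd_lt_matOrd hM hij⟩

theorem matOrd_eq_of_forall_eq_comp {f : ℝ → ℝ} (hf : StrictMono f)
    (hLM : ∀ i j : Fin N, i ≠ j → L i j = f (M i j)) (hij : i ≠ j) :
    matOrd L i j = matOrd M i j := by
  unfold matOrd
  congr 1
  refine Finset.filter_congr fun q _ => and_congr_right fun hq => ?_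
  rw [hLM _ _ hq.ne, hLM _ _ hij, hf.lt_iff_lt]

end matOrd

theorem matOrd_eq_iff_exists_strictMono_general {N : ℕ}
    (L M : Matrix (Fin N) (Fin N) ℝ) (hL : L.IsSymm) (hM : M.IsSymm) :
    (∀ i j : Fin N, i ≠ j → matOrd L i j = matOrd M i j) ↔
      ∃ f : ℝ → ℝ, StrictMono f ∧ ∀ i j : Fin N, i ≠ j → L i j = f (M i j) := by
  constructor
  · intro h
    have hlt : ∀ p q : {p : Fin N × Fin N // p.1 ≠ p.2},
        M p.1.1 p.1.2 < M q.1.1 q.1.2 ↔ L p.1.1 p.1.2 < L q.1.1 q.1.2 := by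
      rintro ⟨⟨i, j⟩, hij⟩ ⟨⟨k, l⟩, hkl⟩
      rw [← matOrd_lt_matOrd_iff hM hij, ← matOrd_lt_matOrd_iff hL hij, h i j hij, h k l hkl]
    obtain ⟨f, hf, hLM⟩ := exists_strictMono_comp_eq_of_lt_iff_lt hlt
    exact ⟨f, hf, fun i j hij => hLM ⟨(i, j), hij⟩⟩
  · rintro ⟨f, hf, hLM⟩ i j hij
    exact matOrd_eq_of_forall_eq_comp hf hLM hij

/-- Two symmetric matrices have the same matrix ordering, `L̂ = M̂`, if and only if
`L` is obtained from `M` by applying a strictly increasing function to each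
off-diagonal entry. -/
theorem matOrd_eq_iff_exists_strictMono {N : ℕ} (hN : 2 ≤ N)
    (L M : Matrix (Fin N) (Fin N) ℝ) (hL : L.IsSymm) (hM : M.IsSymm) :
    (∀ i j : Fin N, i ≠ j → matOrd L i j = matOrd M i j) ↔
      ∃ f : ℝ → ℝ, StrictMono f ∧ ∀ i j : Fin N, i ≠ j → L i j = f (M i j) :=
  matOrd_eq_iff_exists_strictMono_general L M hL hM
end

section
/- Let M be an N×N real symmetric matrix with zero diagonal, let ε ∈ ℝ, and define points p_1,…,p_N ∈ ℝ^N by p_i = (1/√2)(e_i − (ε/2) Σ_{j=1}^N M_{ij} e_j), where e_1,…,e_N is the standard orthonormal basis of ℝ^N. Then for every pair i ≠ j, the squared Euclidean distance satisfies ‖p_i − p_j‖² = 1 + ε M_{ij} + (ε²/8) Σ_{k=1}^N (M_{ik} − M_{jk})². -/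
/-!
With `mᵢ` the `i`-th row of `M`, `pᵢ - pⱼ = (1/√2) ((eᵢ - eⱼ) - (ε/2) (mᵢ - mⱼ))`. Expanding the
square, `‖eᵢ - eⱼ‖² = 2`, and by symmetry and the zero diagonal
`⟪eᵢ - eⱼ, mᵢ - mⱼ⟫ = (Mᵢᵢ - Mⱼᵢ) - (Mᵢⱼ - Mⱼⱼ) = -2 Mᵢⱼ`.
-/

open RealInnerProductSpace

lemma norm_smul_sub_smul_sq {E : Type*} [NormedAddCommGroup E] [InnerProductSpace ℝ E]
    (c t : ℝ) (a b : E) :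
    ‖c • (a - t • b)‖ ^ 2 = c ^ 2 * (‖a‖ ^ 2 - 2 * t * ⟪a, b⟫ + t ^ 2 * ‖b‖ ^ 2) := by
  rw [norm_smul, mul_pow, Real.norm_eq_abs, sq_abs, norm_sub_sq_real, inner_smul_right,
    norm_smul, mul_pow, Real.norm_eq_abs, sq_abs]
  ring

namespace EuclideanSpace

variable {ι : Type*} [Fintype ι] [DecidableEq ι]

lemma sum_smul_single_one_eq_toLp (v : ι → ℝ) :
    ∑ j, v j • EuclideanSpace.single j (1 : ℝ) = WithLp.toLp 2 v := by
  ext k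
  simp [Pi.single_apply]

lemma inner_single_sub_single (i j : ι) (v : EuclideanSpace ℝ ι) :
    ⟪EuclideanSpace.single i (1 : ℝ) - EuclideanSpace.single j 1, v⟫ = v i - v j := by
  simp [inner_sub_left, EuclideanSpace.inner_single_left]

lemma norm_single_sub_single_sq {i j : ι} (hij : i ≠ j) :
    ‖EuclideanSpace.single i (1 : ℝ) - EuclideanSpace.single j 1‖ ^ 2 = 2 := by
  rw [norm_sub_sq_real]
  norm_num [EuclideanSpace.inner_single_left, hij]

end EuclideanSpace

/-- Exact computation of the squared distances between the points
`pᵢ = (1/√2)(eᵢ − (ε/2) ∑ⱼ Mᵢⱼ eⱼ)` built from a symmetric matrix `M` with zero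
diagonal: for `i ≠ j`,
`‖pᵢ − pⱼ‖² = 1 + ε Mᵢⱼ + (ε²/8) ∑ₖ (Mᵢₖ − Mⱼₖ)²`. -/
theorem dist_sq_of_perturbed_basis {N : ℕ} (M : Matrix (Fin N) (Fin N) ℝ)
    (hsym : M.IsSymm) (hdiag : ∀ i, M i i = 0) (ε : ℝ)
    (p : Fin N → EuclideanSpace ℝ (Fin N))
    (hp : ∀ i, p i = (Real.sqrt 2)⁻¹ •
      (EuclideanSpace.single i (1 : ℝ) -
        (ε / 2) • ∑ j : Fin N, M i j • EuclideanSpace.single j (1 : ℝ))) :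
    ∀ i j : Fin N, i ≠ j →
      ‖p i - p j‖ ^ 2 = 1 + ε * M i j + ε ^ 2 / 8 * ∑ k : Fin N, (M i k - M j k) ^ 2 := by
  intro i j hij
  set e : EuclideanSpace ℝ (Fin N) :=
    EuclideanSpace.single i (1 : ℝ) - EuclideanSpace.single j 1
  have hdiff : p i - p j = (Real.sqrt 2)⁻¹ • (e - (ε / 2) • WithLp.toLp 2 (M i - M j)) := by
    simp only [hp, EuclideanSpace.sum_smul_single_one_eq_toLp, WithLp.toLp_sub, e]
    module
  have hinner : ⟪e, WithLp.toLp 2 (M i - M j)⟫ = -2 * M i j := by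
    rw [EuclideanSpace.inner_single_sub_single]
    simp only [Pi.sub_apply, hdiag, hsym.apply i j]
    ring
  rw [hdiff, norm_smul_sub_smul_sq, EuclideanSpace.norm_single_sub_single_sq hij, hinner,
    EuclideanSpace.norm_sq_eq, inv_pow, Real.sq_sqrt zero_le_two]
  simp only [Real.norm_eq_abs, sq_abs, Pi.sub_apply]
  ring
end

section
/- Let M be an N×N real symmetric matrix with zero diagonal whose upper-triangular entries {M_{ij}}_{i<j} are pairwise distinct. For ε > 0 define points p_1,…,p_N ∈ ℝ^N by p_i = (1/√2)(e_i − (ε/2) Σ_{j=1}^N M_{ij} e_j), where e_1,…,e_N is the standard orthonormal basis. Then there exists ε_0 > 0 such that for all ε with 0 < ε < ε_0 and all index pairs i < j and k < ℓ with (i,j) ≠ (k,ℓ), one has ‖p_i − p_j‖ < ‖p_k − p_ℓ‖ if and only if M_{ij} < M_{kℓ}. In particular, the Euclidean distance matrix D_{ij} = ‖p_i − p_j‖ satisfies D̂ = M̂, so every matrix ordering with distinct off-diagonal entries possesses a geometric realization by N points in (N−1)-dimensional Euclidean space. -/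
open Filter Topology

section

variable {ι : Type*} [Fintype ι] [DecidableEq ι]

noncomputable def realizationPoint (M : Matrix ι ι ℝ) (ε : ℝ) (i : ι) : EuclideanSpace ℝ ι :=
  (√2)⁻¹ • (EuclideanSpace.single i 1 - (ε / 2) • WithLp.toLp 2 (M i))

lemma sum_smul_single_eq_toLp (v : ι → ℝ) :
    ∑ j, v j • EuclideanSpace.single j (1 : ℝ) = WithLp.toLp 2 v := by
  ext k; simp [Pi.single_apply]

lemma norm_single_sub_single_sq {i j : ι} (hij : i ≠ j) :
    ‖EuclideanSpace.single i (1 : ℝ) - EuclideanSpace.single j 1‖ ^ 2 = 2 := by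
  rw [norm_sub_sq_real, EuclideanSpace.inner_single_left]
  norm_num [hij.symm]

lemma dist_realizationPoint_sq {M : Matrix ι ι ℝ} (hsym : M.IsSymm) (hdiag : ∀ i, M i i = 0)
    (ε : ℝ) {i j : ι} (hij : i ≠ j) :
    dist (realizationPoint M ε i) (realizationPoint M ε j) ^ 2 =
      1 + ε * M i j + ε ^ 2 * (dist (WithLp.toLp 2 (M i)) (WithLp.toLp 2 (M j)) ^ 2 / 8) := by
  have hdiff : realizationPoint M ε i - realizationPoint M ε j = (√2)⁻¹ •
      ((EuclideanSpace.single i 1 - EuclideanSpace.single j 1) -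
        (ε / 2) • (WithLp.toLp 2 (M i) - WithLp.toLp 2 (M j))) := by
    simp only [realizationPoint, smul_sub]; abel
  have hinner : inner ℝ (EuclideanSpace.single i (1 : ℝ) - EuclideanSpace.single j 1)
      (WithLp.toLp 2 (M i) - WithLp.toLp 2 (M j)) = -2 * M i j := by
    simp [inner_sub_left, EuclideanSpace.inner_single_left, hdiag, hsym.apply i j]; ring
  rw [dist_eq_norm, hdiff, norm_smul, mul_pow, norm_sub_sq_real, norm_smul, inner_smul_right,
    hinner, mul_pow, norm_single_sub_single_sq hij, dist_eq_norm]
  simp only [norm_inv, Real.norm_eq_abs, abs_of_nonneg (Real.sqrt_nonneg 2), inv_pow,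
    Real.sq_sqrt zero_le_two, sq_abs]
  ring

lemma eventually_mul_add_sq_mul_lt_iff {a b c d : ℝ} (hac : a ≠ c) :
    ∀ᶠ ε in 𝓝[>] 0, (ε * a + ε ^ 2 * b < ε * c + ε ^ 2 * d ↔ a < c) := by
  have ht : ∀ x y : ℝ, Tendsto (fun ε => x + ε * y) (𝓝[>] 0) (𝓝 x) := fun x y =>
    tendsto_nhdsWithin_of_tendsto_nhds
      ((continuous_const.add (continuous_id.mul continuous_const)).tendsto' 0 x (by simp))
  have hscale : ∀ ε : ℝ, 0 < ε →
      (ε * a + ε ^ 2 * b < ε * c + ε ^ 2 * d ↔ a + ε * b < c + ε * d) := fun ε hε => by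
    rw [show ε * a + ε ^ 2 * b = ε * (a + ε * b) by ring,
      show ε * c + ε ^ 2 * d = ε * (c + ε * d) by ring]
    exact mul_lt_mul_iff_of_pos_left hε
  rcases hac.lt_or_gt with h | h
  · filter_upwards [self_mem_nhdsWithin, (ht a b).eventually_lt (ht c d) h] with ε hε hlt
    exact iff_of_true ((hscale ε hε).2 hlt) h
  · filter_upwards [self_mem_nhdsWithin, (ht c d).eventually_lt (ht a b) h] with ε hε hlt
    exact iff_of_false (fun h' => ((hscale ε hε).1 h').not_gt hlt) h.not_gt

lemma eventually_dist_realizationPoint_lt_iff {M : Matrix ι ι ℝ} (hsym : M.IsSymm)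
    (hdiag : ∀ i, M i i = 0) {i j k l : ι} (hij : i ≠ j) (hkl : k ≠ l) (hne : M i j ≠ M k l) :
    ∀ᶠ ε in 𝓝[>] 0, (dist (realizationPoint M ε i) (realizationPoint M ε j) <
      dist (realizationPoint M ε k) (realizationPoint M ε l) ↔ M i j < M k l) := by
  filter_upwards [eventually_mul_add_sq_mul_lt_iff hne] with ε h
  rw [← sq_lt_sq₀ dist_nonneg dist_nonneg, dist_realizationPoint_sq hsym hdiag ε hij,
    dist_realizationPoint_sq hsym hdiag ε hkl, add_assoc, add_assoc, add_lt_add_iff_left]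
  exact h

end

section

variable {N : ℕ} {A B : Matrix (Fin N) (Fin N) ℝ}

lemma matOrd_congr {i j : Fin N} (h : ∀ k l, k < l → (A k l < A i j ↔ B k l < B i j)) :
    matOrd A i j = matOrd B i j := by
  unfold matOrd
  congr 1
  exact Finset.filter_congr fun q _ => and_congr_right (h q.1 q.2)

lemma Matrix.IsSymm.matOrd_comm (hA : A.IsSymm) (i j : Fin N) : matOrd A i j = matOrd A j i := by
  rw [matOrd, matOrd, hA.apply]

end

/-- Geometric realization of an arbitrary matrix ordering: for a symmetric matrix `M`
with zero diagonal and pairwise distinct upper-triangular entries, the points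
`pᵢ(ε) = (1/√2)(eᵢ − (ε/2) ∑ⱼ Mᵢⱼ eⱼ)` in `ℝᴺ` satisfy, for all small enough `ε > 0`,
`‖pᵢ − pⱼ‖ < ‖pₖ − pₗ‖ ↔ Mᵢⱼ < Mₖₗ`; in particular the Euclidean distance matrix
`Dᵢⱼ = ‖pᵢ − pⱼ‖` satisfies `D̂ = M̂`, i.e. the points are a geometric realization
of the matrix ordering `M̂`. -/
theorem exists_geometric_realization {N : ℕ} (M : Matrix (Fin N) (Fin N) ℝ)
    (hsym : M.IsSymm) (hdiag : ∀ i, M i i = 0)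
    (hdist : ∀ i j k l : Fin N, i < j → k < l → (i, j) ≠ (k, l) → M i j ≠ M k l)
    (p : ℝ → Fin N → EuclideanSpace ℝ (Fin N))
    (hp : ∀ ε i, p ε i = (Real.sqrt 2)⁻¹ •
      (EuclideanSpace.single i (1 : ℝ) -
        (ε / 2) • ∑ j : Fin N, M i j • EuclideanSpace.single j (1 : ℝ))) :
    ∃ ε₀ > (0 : ℝ), ∀ ε : ℝ, 0 < ε → ε < ε₀ →
      (∀ i j k l : Fin N, i < j → k < l → (i, j) ≠ (k, l) →
        (dist (p ε i) (p ε j) < dist (p ε k) (p ε l) ↔ M i j < M k l)) ∧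
      (∀ i j : Fin N, i ≠ j →
        matOrd (Matrix.of fun a b : Fin N => dist (p ε a) (p ε b)) i j = matOrd M i j) := by
  obtain rfl : p = realizationPoint M := by
    funext ε i
    rw [hp, sum_smul_single_eq_toLp]
    rfl
  have hord : ∀ᶠ ε in 𝓝[>] 0, ∀ i j k l : Fin N, i < j → k < l →
      (dist (realizationPoint M ε i) (realizationPoint M ε j) <
        dist (realizationPoint M ε k) (realizationPoint M ε l) ↔ M i j < M k l) := by
    -- `eventually_all` also passes through the implications: propositions are `Finite` types.
    simp only [eventually_all]
    intro i j k l hij hkl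
    by_cases hpair : (i, j) = (k, l)
    · obtain ⟨rfl, rfl⟩ := Prod.ext_iff.mp hpair
      exact .of_forall fun _ => iff_of_false (lt_irrefl _) (lt_irrefl _)
    · exact eventually_dist_realizationPoint_lt_iff hsym hdiag hij.ne hkl.ne
        (hdist i j k l hij hkl hpair)
  obtain ⟨ε₀, hε₀, hsub⟩ := (nhdsGT_basis 0).eventually_iff.1 hord
  refine ⟨ε₀, hε₀, fun ε hε hεε₀ => ?_⟩
  have hcmp := hsub ⟨hε, hεε₀⟩
  refine ⟨fun i j k l hij hkl _ => hcmp i j k l hij hkl, fun i j hij => ?_⟩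
  have hD : (Matrix.of fun a b => dist (realizationPoint M ε a) (realizationPoint M ε b)).IsSymm :=
    Matrix.IsSymm.ext fun a b => dist_comm (realizationPoint M ε b) _
  have hupper : ∀ i j : Fin N, i < j → matOrd _ i j = matOrd M i j := fun i j hij =>
    matOrd_congr fun k l hkl => hcmp k l i j hkl hij
  rcases hij.lt_or_gt with hij | hji
  · exact hupper i j hij
  · rw [hD.matOrd_comm, hsym.matOrd_comm]
    exact hupper j i hji
end

section
/- There do not exist four pairwise distinct real numbers x_1, x_2, x_3, x_4 such that each of the three distances |x_1 − x_2|, |x_1 − x_3|, |x_1 − x_4| is strictly less than each of the three distances |x_2 − x_3|, |x_2 − x_4|, |x_3 − x_4|. Equivalently, for points on a line, the three smallest pairwise distances cannot all involve a common point. -/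
/-!
Among `x₂, x₃, x₄`, two lie on the same side of `x₁`, since the three displacements
`xᵢ - x₁` cannot have pairwise negative products. The distance between two points on the
same side of `x₁` is at most the larger of their distances to `x₁`, so it cannot exceed
both of them.
-/

theorem exists_pair_mul_nonneg {α : Type*} [CommRing α] [LinearOrder α] [IsStrictOrderedRing α]
    (u v w : α) : 0 ≤ u * v ∨ 0 ≤ u * w ∨ 0 ≤ v * w := by
  by_contra! h
  obtain ⟨huv, huw, hvw⟩ := h
  have hprod : (u * v) * (u * w) * (v * w) < 0 :=
    mul_neg_of_pos_of_neg (mul_pos_of_neg_of_neg huv huw) hvw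
  have hsq : (u * v) * (u * w) * (v * w) = (u * v * w) ^ 2 := by ring
  exact hprod.not_ge (hsq ▸ sq_nonneg _)

section

variable {α : Type*} [Ring α] [LinearOrder α] [IsStrictOrderedRing α]

theorem abs_sub_le_max_of_nonneg {x y : α} (hx : 0 ≤ x) (hy : 0 ≤ y) : |x - y| ≤ max x y :=
  abs_sub_le_iff.2
    ⟨(sub_le_self x hy).trans (le_max_left x y), (sub_le_self y hx).trans (le_max_right x y)⟩

theorem abs_sub_le_max_abs_of_mul_nonneg {x y : α} (h : 0 ≤ x * y) :
    |x - y| ≤ max |x| |y| := by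
  rcases mul_nonneg_iff.1 h with ⟨hx, hy⟩ | ⟨hx, hy⟩
  · rw [abs_of_nonneg hx, abs_of_nonneg hy]
    exact abs_sub_le_max_of_nonneg hx hy
  · rw [abs_of_nonpos hx, abs_of_nonpos hy, abs_sub_comm, ← neg_sub_neg]
    exact abs_sub_le_max_of_nonneg (neg_nonneg.2 hx) (neg_nonneg.2 hy)

theorem abs_sub_le_max_abs_sub_of_mul_nonneg {a b c : α} (h : 0 ≤ (b - a) * (c - a)) :
    |b - c| ≤ max |a - b| |a - c| := by
  rw [abs_sub_comm a b, abs_sub_comm a c, ← sub_sub_sub_cancel_right b c a]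
  exact abs_sub_le_max_abs_of_mul_nonneg h

end

/-- For four distinct points on a line, the three smallest pairwise distances cannot
all involve a common point: there do not exist pairwise distinct reals
`x₁, x₂, x₃, x₄` such that each of `|x₁−x₂|, |x₁−x₃|, |x₁−x₄|` is strictly smaller
than each of `|x₂−x₃|, |x₂−x₄|, |x₃−x₄|`. -/
theorem not_exists_line_three_smallest_share_point :
    ¬ ∃ x₁ x₂ x₃ x₄ : ℝ,
      (x₁ ≠ x₂ ∧ x₁ ≠ x₃ ∧ x₁ ≠ x₄ ∧ x₂ ≠ x₃ ∧ x₂ ≠ x₄ ∧ x₃ ≠ x₄) ∧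
      (∀ a ∈ ({|x₁ - x₂|, |x₁ - x₃|, |x₁ - x₄|} : Set ℝ),
        ∀ b ∈ ({|x₂ - x₃|, |x₂ - x₄|, |x₃ - x₄|} : Set ℝ), a < b) := by
  rintro ⟨x₁, x₂, x₃, x₄, -, hlt⟩
  rcases exists_pair_mul_nonneg (x₂ - x₁) (x₃ - x₁) (x₄ - x₁) with h | h | h <;>
    exact (abs_sub_le_max_abs_sub_of_mul_nonneg h).not_gt
      (max_lt (hlt _ (by simp) _ (by simp)) (hlt _ (by simp) _ (by simp)))
end

section
/- Let p_1, p_2, p_3 be points in the Euclidean plane ℝ² whose pairwise distances are all strictly greater than 1. If q and q′ are points of ℝ² satisfying dist(q, p_i) < 1 and dist(q′, p_i) < 1 for each i = 1, 2, 3 (i.e., q, q′ ∈ D(p_1) ∩ D(p_2) ∩ D(p_3), the intersection of the three open unit disks), then dist(q, q′) < 1. In other words, the intersection of three unit disks whose centers are pairwise more than unit distance apart has diameter less than 1. -/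
/-!
Suppose `dist q q' ≥ 1`. An isometry of `ℂ` moves `q` to `0` and `q'` to the real number
`d = dist q q' ≥ 1`, and then the three centres lie in the lens `D(0) ∩ D(d)`. Two of them lie in
the same closed half-plane bounded by `ℝ`, and any two points of such a half-lens are less than `1`
apart, which contradicts the separation of the centres.
-/

lemma sq_sub_add_sq_sub_lt_one_of_mem_half_lens {d x y x' y' : ℝ} (hd : 1 ≤ d)
    (h₀ : x ^ 2 + y ^ 2 < 1) (h₁ : (d - x) ^ 2 + y ^ 2 < 1)
    (h₀' : x' ^ 2 + y' ^ 2 < 1) (h₁' : (d - x') ^ 2 + y' ^ 2 < 1) (hyy' : 0 ≤ y * y') :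
    (x - x') ^ 2 + (y - y') ^ 2 < 1 := by
  wlog hy : y' ^ 2 ≤ y ^ 2 generalizing x y x' y'
  · have := this h₀' h₁' h₀ h₁ (by rwa [mul_comm]) (by linarith)
    linarith [sub_sq_comm x x', sub_sq_comm y y']
  -- As `|y'| ≤ |y|` and `d - 1 < x' < 1`, `(x', y')` is no farther from `(x, y)` than the farther
  -- of `(0, 0)` and `(d, 0)`.
  have hy' : (y - y') ^ 2 ≤ y ^ 2 := by nlinarith
  have hx'₀ : d - 1 < x' := by nlinarith
  have hx'₁ : x' < 1 := by nlinarith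
  rcases le_total x (d / 2) with hx | hx
  · have : (x - x') ^ 2 ≤ (d - x) ^ 2 := by nlinarith
    linarith
  · have : (x - x') ^ 2 ≤ x ^ 2 := by nlinarith
    linarith

lemma exists_pair_mul_nonneg_s9 (a b c : ℝ) : 0 ≤ a * b ∨ 0 ≤ a * c ∨ 0 ≤ b * c := by
  by_contra! h
  nlinarith [mul_pos_of_neg_of_neg h.1 h.2.1, sq_nonneg a]

namespace Complex

lemma dist_lt_one_iff (z w : ℂ) :
    dist z w < 1 ↔ (z.re - w.re) ^ 2 + (z.im - w.im) ^ 2 < 1 := by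
  rw [dist_eq_re_im, Real.sqrt_lt' one_pos, one_pow]

lemma dist_lt_one_of_mem_half_lens {d : ℝ} (hd : 1 ≤ d) {a b : ℂ}
    (ha₀ : dist 0 a < 1) (ha₁ : dist (d : ℂ) a < 1) (hb₀ : dist 0 b < 1) (hb₁ : dist (d : ℂ) b < 1)
    (hab : 0 ≤ a.im * b.im) : dist a b < 1 := by
  simp only [dist_lt_one_iff, zero_re, zero_im, ofReal_re, ofReal_im, zero_sub, neg_sq] at *
  exact sq_sub_add_sq_sub_lt_one_of_mem_half_lens hd ha₀ ha₁ hb₀ hb₁ hab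

lemma exists_isometry_map_eq_zero_map_eq_dist (q q' : ℂ) :
    ∃ f : ℂ → ℂ, Isometry f ∧ f q = 0 ∧ f q' = dist q q' := by
  obtain ⟨u, hu, huq⟩ : ∃ u : ℂ, ‖u‖ = 1 ∧ u * (q' - q) = dist q q' := by
    refine ⟨exp (↑(-(q' - q).arg) * I), norm_exp_ofReal_mul_I _, ?_⟩
    conv_lhs => rw [← norm_mul_exp_arg_mul_I (q' - q)]
    rw [dist_comm, dist_eq, mul_left_comm, ← exp_add]
    simp
  refine ⟨fun z ↦ u * (z - q), Isometry.of_dist_eq fun z w ↦ ?_, by simp, huq⟩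
  rw [dist_eq, dist_eq, ← mul_sub, sub_sub_sub_cancel_right, norm_mul, hu, one_mul]

theorem dist_lt_one_of_mem_three_disks {p₁ p₂ p₃ q q' : ℂ}
    (h12 : 1 < dist p₁ p₂) (h13 : 1 < dist p₁ p₃) (h23 : 1 < dist p₂ p₃)
    (hq1 : dist q p₁ < 1) (hq2 : dist q p₂ < 1) (hq3 : dist q p₃ < 1)
    (hq'1 : dist q' p₁ < 1) (hq'2 : dist q' p₂ < 1) (hq'3 : dist q' p₃ < 1) :
    dist q q' < 1 := by
  by_contra! hqq'
  obtain ⟨f, hf, hfq, hfq'⟩ := exists_isometry_map_eq_zero_map_eq_dist q q'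
  have half_lens {a b : ℂ} (hqa : dist q a < 1) (hq'a : dist q' a < 1) (hqb : dist q b < 1)
      (hq'b : dist q' b < 1) (hab : 0 ≤ (f a).im * (f b).im) : dist a b < 1 := by
    rw [← hf.dist_eq]
    exact dist_lt_one_of_mem_half_lens hqq' (by rwa [← hfq, hf.dist_eq])
      (by rwa [← hfq', hf.dist_eq]) (by rwa [← hfq, hf.dist_eq]) (by rwa [← hfq', hf.dist_eq]) hab
  rcases exists_pair_mul_nonneg_s9 (f p₁).im (f p₂).im (f p₃).im with h | h | h
  · exact h12.not_gt (half_lens hq1 hq'1 hq2 hq'2 h)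
  · exact h13.not_gt (half_lens hq1 hq'1 hq3 hq'3 h)
  · exact h23.not_gt (half_lens hq2 hq'2 hq3 hq'3 h)

end Complex

/-- If the three centers `p₁, p₂, p₃` in the Euclidean plane are pairwise more than
unit distance apart, then the intersection of the three open unit disks around them
has diameter less than `1`: any two points `q, q'` lying within distance `1` of all
three centers satisfy `dist q q' < 1`. -/
theorem dist_lt_one_of_mem_three_disks
    (p₁ p₂ p₃ q q' : EuclideanSpace ℝ (Fin 2))
    (h12 : 1 < dist p₁ p₂) (h13 : 1 < dist p₁ p₃) (h23 : 1 < dist p₂ p₃)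
    (hq1 : dist q p₁ < 1) (hq2 : dist q p₂ < 1) (hq3 : dist q p₃ < 1)
    (hq'1 : dist q' p₁ < 1) (hq'2 : dist q' p₂ < 1) (hq'3 : dist q' p₃ < 1) :
    dist q q' < 1 := by
  let e := Complex.orthonormalBasisOneI.repr.symm
  rw [← e.dist_map] at h12 h13 h23 hq1 hq2 hq3 hq'1 hq'2 hq'3 ⊢
  exact Complex.dist_lt_one_of_mem_three_disks h12 h13 h23 hq1 hq2 hq3 hq'1 hq'2 hq'3
end
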